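/- For all integers n ≥ 1, m ≥ 1 and every rational number x, one has Σ_{k=0}^{n} f^B_{n−k}(n,m)·(x−1)^k = Σ_{k=0}^{n} h^B_{n−k}(n,m)·x^k, where h^B_k(n,m) = C(n,k)·C(nm, k); that is, the h-vector of the generalized cluster complex Δ^m(B_n) is given by h_k = C(n,k)·C(nm, k) (the type-B m-Narayana numbers). -/

import Mathlib

open Finset

/-- The binomial coefficient `C(a, b)` for integers `a, b`, with the convention
that it vanishes unless `0 ≤ b ≤ a`. -/
def cc (a b : ℤ) : ℚ :=
  if 0 ≤ b ∧ b ≤ a then (a.toNat.choose b.toNat : ℚ) else 0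

/-- The type-A face numbers `f^A_k(n, m) = (1/(k+1))·C(n,k)·C((n+1)m+k+1, k)`:
the number of `k`-element faces of the generalized cluster complex `Δ^m(A_n)`. -/
def fA (n m k : ℕ) : ℚ :=
  1 / ((k : ℚ) + 1) * cc n k * cc (((n : ℤ) + 1) * m + k + 1) k

/-- The type-B face numbers `f^B_k(n, m) = C(n,k)·C(nm+k, k)`:
the number of `k`-element faces of the generalized cluster complex `Δ^m(B_n)`. -/
def fB (n m k : ℕ) : ℚ :=
  cc n k * cc ((n : ℤ) * m + k) k

/-- The type-D face numbers
`f^D_k(n, m) = C(n,k)·C((n-1)m+k, k) + C(n-2,k-2)·C((n-1)m+k-1, k)`: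
the number of `k`-element faces of the generalized cluster complex `Δ^m(D_n)`. -/
def fD (n m k : ℕ) : ℚ :=
  cc n k * cc (((n : ℤ) - 1) * m + k) k
    + cc ((n : ℤ) - 2) ((k : ℤ) - 2) * cc (((n : ℤ) - 1) * m + k - 1) k

lemma cc_natCast (a b : ℕ) : cc (a : ℤ) (b : ℤ) = (a.choose b : ℚ) := by
  unfold cc
  split_ifs with h
  · simp
  · push_neg at h
    have hb : ¬ b ≤ a := by
      intro hba
      exact absurd (by exact_mod_cast hba) (by simpa using h (by positivity))
    rw [Nat.choose_eq_zero_of_lt (lt_of_not_ge hb)]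
    simp

lemma trinom (n i j : ℕ) :
    n.choose j * (n - j).choose i = n.choose i * (n - i).choose j := by
  by_cases h : i + j ≤ n
  · have hj : j ≤ n := le_trans (Nat.le_add_left _ _) h
    have hi : i ≤ n - j := Nat.le_sub_of_add_le (by omega)
    rw [← Nat.choose_symm hj, Nat.choose_mul hi]
    congr 1
    rw [show n - j - i = (n - i) - j by omega]
    exact Nat.choose_symm (by omega)
  · have h1 : (n - j).choose i = 0 ∨ n.choose j = 0 := by
      by_cases hj : j ≤ n
      · exact Or.inl (Nat.choose_eq_zero_of_lt (by omega))
      · exact Or.inr (Nat.choose_eq_zero_of_lt (by omega))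
    have h2 : (n - i).choose j = 0 ∨ n.choose i = 0 := by
      by_cases hi : i ≤ n
      · exact Or.inl (Nat.choose_eq_zero_of_lt (by omega))
      · exact Or.inr (Nat.choose_eq_zero_of_lt (by omega))
    rcases h1 with h1 | h1 <;> rcases h2 with h2 | h2 <;> simp [h1, h2]

lemma vand (a b : ℕ) :
    ∑ j ∈ range (a + 1), a.choose j * b.choose j = (b + a).choose a := by
  rw [Nat.add_choose_eq, Finset.Nat.sum_antidiagonal_eq_sum_range_succ_mk]
  refine Finset.sum_congr rfl fun k hk => ?_
  have hk' : k ≤ a := Nat.lt_succ_iff.mp (mem_range.mp hk)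
  rw [Nat.choose_symm hk', mul_comm]

lemma key (n m i : ℕ) (hi : i ≤ n) :
    ∑ k ∈ range (n + 1), n.choose (n - k) * ((n * m).choose (n - k) * k.choose i)
      = n.choose i * (n * m + (n - i)).choose (n - i) := by
  rw [← Finset.sum_range_reflect]
  have : ∀ k ∈ range (n + 1),
      n.choose (n - (n + 1 - 1 - k)) * ((n * m).choose (n - (n + 1 - 1 - k)) * (n + 1 - 1 - k).choose i)
        = n.choose i * ((n - i).choose k * (n * m).choose k) := by
    intro k hk
    have hk' : k ≤ n := Nat.lt_succ_iff.mp (mem_range.mp hk)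
    have e1 : n - (n + 1 - 1 - k) = k := by omega
    have e2 : n + 1 - 1 - k = n - k := by omega
    rw [e1, e2, mul_left_comm, trinom n i k]
    ring
  rw [Finset.sum_congr rfl this, ← Finset.mul_sum]
  congr 1
  rw [← vand (n - i) (n * m)]
  symm
  apply Finset.sum_subset
  · intro x hx; simp only [mem_range] at *; omega
  · intro x _ hx
    simp only [mem_range, not_lt] at hx
    rw [Nat.choose_eq_zero_of_lt (by omega)]
    ring

/-- The `h`-vector of the generalized cluster complex `Δ^m(B_n)` is given by the
type-B `m`-Narayana numbers `h^B_k(n,m) = C(n,k)·C(nm, k)`: for every rational `x`,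
`Σ_{k=0}^{n} f^B_{n−k}(n,m)·(x−1)^k = Σ_{k=0}^{n} h^B_{n−k}(n,m)·x^k`. -/
theorem h_vector_type_B (n m : ℕ) (hn : 1 ≤ n) (hm : 1 ≤ m) (x : ℚ) :
    ∑ k ∈ Finset.range (n + 1), fB n m (n - k) * (x - 1) ^ k
      = ∑ k ∈ Finset.range (n + 1),
          (cc n ((n : ℤ) - k) * cc ((n : ℤ) * m) ((n : ℤ) - k)) * x ^ k := by
  have hcast : ∀ k : ℕ, k ≤ n →
      fB n m (n - k) = ((n.choose (n - k) * (n * m + (n - k)).choose (n - k) : ℕ) : ℚ) := by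
    intro k hk
    unfold fB
    have h1 : (n : ℤ) * m + ((n - k : ℕ) : ℤ) = ((n * m + (n - k) : ℕ) : ℤ) := by push_cast; ring
    rw [h1, cc_natCast, cc_natCast]
    push_cast; ring
  have hcast2 : ∀ k : ℕ, k ≤ n →
      cc n ((n : ℤ) - k) * cc ((n : ℤ) * m) ((n : ℤ) - k)
        = ((n.choose (n - k) * (n * m).choose (n - k) : ℕ) : ℚ) := by
    intro k hk
    have h1 : (n : ℤ) - k = ((n - k : ℕ) : ℤ) := by omega
    have h2 : (n : ℤ) * m = ((n * m : ℕ) : ℤ) := by push_cast; ring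
    rw [h1, h2, cc_natCast, cc_natCast]
    push_cast; ring
  have step1 : ∀ k ∈ range (n + 1), x ^ k = ∑ i ∈ range (n + 1), (x - 1) ^ i * (k.choose i : ℚ) := by
    intro k hk
    have hk' : k ≤ n := Nat.lt_succ_iff.mp (mem_range.mp hk)
    have hx : x ^ k = ((x - 1) + 1) ^ k := by ring
    rw [hx, add_pow]
    simp only [one_pow, mul_one]
    apply Finset.sum_subset
    · intro i hi; simp only [mem_range] at *; omega
    · intro i _ hi
      simp only [mem_range, not_lt] at hi
      rw [Nat.choose_eq_zero_of_lt (by omega)]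
      simp
  symm
  calc ∑ k ∈ range (n + 1), (cc n ((n : ℤ) - k) * cc ((n : ℤ) * m) ((n : ℤ) - k)) * x ^ k
      = ∑ k ∈ range (n + 1), ∑ i ∈ range (n + 1),
          ((n.choose (n - k) * (n * m).choose (n - k) : ℕ) : ℚ) * ((x - 1) ^ i * (k.choose i : ℚ)) := by
        refine Finset.sum_congr rfl fun k hk => ?_
        rw [hcast2 k (Nat.lt_succ_iff.mp (mem_range.mp hk)), step1 k hk, Finset.mul_sum]
    _ = ∑ i ∈ range (n + 1),
          ((n.choose i * (n * m + (n - i)).choose (n - i) : ℕ) : ℚ) * (x - 1) ^ i := by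
        rw [Finset.sum_comm]
        refine Finset.sum_congr rfl fun i hi => ?_
        have hi' : i ≤ n := Nat.lt_succ_iff.mp (mem_range.mp hi)
        calc ∑ k ∈ range (n + 1),
              ((n.choose (n - k) * (n * m).choose (n - k) : ℕ) : ℚ) * ((x - 1) ^ i * (k.choose i : ℚ))
            = (x - 1) ^ i *
                ((∑ k ∈ range (n + 1), n.choose (n - k) * ((n * m).choose (n - k) * k.choose i) : ℕ) : ℚ) := by
              push_cast
              rw [Finset.mul_sum]
              refine Finset.sum_congr rfl fun k _ => by ring
          _ = ((n.choose i * (n * m + (n - i)).choose (n - i) : ℕ) : ℚ) * (x - 1) ^ i := by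
              rw [key n m i hi']; ring
    _ = ∑ k ∈ range (n + 1), fB n m (n - k) * (x - 1) ^ k := by
        refine Finset.sum_congr rfl fun i hi => ?_
        have hi' : i ≤ n := Nat.lt_succ_iff.mp (mem_range.mp hi)
        rw [hcast i hi']
        push_cast
        rw [Nat.choose_symm hi']
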